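/- Let Ω ⊆ ℝⁿ be measurable, let p : Ω → [1,∞) be bounded measurable, let r : Ω → ℝ be bounded measurable taking both a negative value and a nonnegative value on Ω, and let a ∈ L^∞(Ω) with a ≥ 0. Then there exists a constant b > 0 (depending only on p, r and ‖a‖_∞) such that for every measurable set A ⊆ Ω with 0 < |A| < 1/2 and sup_A r ≥ 0: |A|^{1/p⁻_A} ≤ ‖1_A‖_{L^Φ(Ω)} ≤ b (1+‖a‖_∞)^{1/p⁻_A} · max{ |A|^{1/p⁺_A} (log(e + 1/|A|))^{r⁺_A}, |A|^{1/p⁻_A} (log(1+e))^{r⁺_A} }. -/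

import Mathlib

/-!
The modular of `1_A / λ` is `∫_A Φ(x, 1/λ) dx`, and on `A` the integrand lies between
`λ^{-p(x)}` and `(1 + ‖a‖_∞) λ^{-p(x)} (log(e + 1/λ))^{r⁺_A}`. The lower bound follows from
`λ^{-p(x)} ≥ λ^{-p⁻_A}` for `λ < 1`. For the upper bound take
`λ = (1 + ‖a‖_∞)^{1/p⁻_A} · max{…}`, i.e. `b = 1`: if `λ ≥ 1`, the exponent `p⁻_A` and
`log(e + 1/λ) ≤ log(1 + e)` make the modular at most `1`; if `λ < 1`, then `λ ≥ |A|`, and the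
exponent `p⁺_A` together with `log(e + 1/λ) ≤ log(e + 1/|A|)` does.
-/

open MeasureTheory Set
open scoped ENNReal

/-- The function `Φ(x,t) = t^{p(x)} + a(x) t^{p(x)} (log(e+t))^{r(x)}`. -/
noncomputable def Phi2 {n : ℕ} (p r a : EuclideanSpace ℝ (Fin n) → ℝ)
    (x : EuclideanSpace ℝ (Fin n)) (t : ℝ) : ℝ :=
  t ^ p x + a x * t ^ p x * (Real.log (Real.exp 1 + t)) ^ r x

/-- The Luxemburg (quasi-)norm `‖u‖_{L^Φ(Ω)} = inf{λ > 0 : ∫_Ω Φ(x,|u(x)|/λ) dx ≤ 1}`,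
valued in `ℝ≥0∞`, with `inf ∅ = ∞`. -/
noncomputable def luxNorm {n : ℕ} (Ω : Set (EuclideanSpace ℝ (Fin n)))
    (Φ : EuclideanSpace ℝ (Fin n) → ℝ → ℝ)
    (u : EuclideanSpace ℝ (Fin n) → ℝ) : ℝ≥0∞ :=
  sInf ((fun l : ℝ => ENNReal.ofReal l) ''
    {l : ℝ | 0 < l ∧ (∫⁻ x in Ω, ENNReal.ofReal (Φ x (|u x| / l))) ≤ 1})

lemma one_le_log_exp_one_add {t : ℝ} (ht : 0 ≤ t) : 1 ≤ Real.log (Real.exp 1 + t) := by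
  rw [Real.le_log_iff_exp_le (by positivity)]
  linarith

section Phi2

variable {n : ℕ} {p r a : EuclideanSpace ℝ (Fin n) → ℝ} {x : EuclideanSpace ℝ (Fin n)}

lemma Phi2_apply_zero (hp : p x ≠ 0) : Phi2 p r a x 0 = 0 := by
  simp [Phi2, Real.zero_rpow hp]

lemma rpow_le_Phi2 (ha : 0 ≤ a x) {t : ℝ} (ht : 0 ≤ t) : t ^ p x ≤ Phi2 p r a x t := by
  have hlog := (one_le_log_exp_one_add ht).trans' zero_le_one
  unfold Phi2
  have := mul_nonneg (mul_nonneg ha (Real.rpow_nonneg ht (p x))) (Real.rpow_nonneg hlog (r x))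
  linarith

lemma Phi2_le_mul_log_rpow {K ρ : ℝ} (ha : 0 ≤ a x) (haK : a x ≤ K) (hr : r x ≤ ρ) (hρ : 0 ≤ ρ)
    {t : ℝ} (ht : 0 ≤ t) :
    Phi2 p r a x t ≤ (1 + K) * t ^ p x * Real.log (Real.exp 1 + t) ^ ρ := by
  have hlog := one_le_log_exp_one_add ht
  have hpow : Real.log (Real.exp 1 + t) ^ r x ≤ Real.log (Real.exp 1 + t) ^ ρ :=
    Real.rpow_le_rpow_of_exponent_le hlog hr
  have hone : 1 ≤ Real.log (Real.exp 1 + t) ^ ρ := Real.one_le_rpow hlog hρ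
  have htp := Real.rpow_nonneg ht (p x)
  unfold Phi2
  calc t ^ p x + a x * t ^ p x * Real.log (Real.exp 1 + t) ^ r x
      ≤ t ^ p x * Real.log (Real.exp 1 + t) ^ ρ + K * t ^ p x * Real.log (Real.exp 1 + t) ^ ρ := by
        have hfirst : t ^ p x ≤ t ^ p x * Real.log (Real.exp 1 + t) ^ ρ :=
          le_mul_of_one_le_right htp hone
        have hsecond : a x * t ^ p x * Real.log (Real.exp 1 + t) ^ r x ≤
            K * t ^ p x * Real.log (Real.exp 1 + t) ^ ρ := by
          gcongr
          exact mul_nonneg (ha.trans haK) htp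
        linarith
    _ = (1 + K) * t ^ p x * Real.log (Real.exp 1 + t) ^ ρ := by ring

end Phi2

section Luxemburg

variable {n : ℕ} {Ω A : Set (EuclideanSpace ℝ (Fin n))} {Φ : EuclideanSpace ℝ (Fin n) → ℝ → ℝ}
  {u : EuclideanSpace ℝ (Fin n) → ℝ}

lemma luxNorm_le_ofReal {l : ℝ} (hl : 0 < l)
    (h : ∫⁻ x in Ω, ENNReal.ofReal (Φ x (|u x| / l)) ≤ 1) : luxNorm Ω Φ u ≤ ENNReal.ofReal l :=
  sInf_le ⟨l, ⟨hl, h⟩, rfl⟩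

lemma ofReal_le_luxNorm {c : ℝ}
    (h : ∀ l, 0 < l → ∫⁻ x in Ω, ENNReal.ofReal (Φ x (|u x| / l)) ≤ 1 → c ≤ l) :
    ENNReal.ofReal c ≤ luxNorm Ω Φ u :=
  le_sInf <| by
    rintro _ ⟨l, ⟨hl, hmod⟩, rfl⟩
    exact ENNReal.ofReal_le_ofReal (h l hl hmod)

lemma setLIntegral_indicator_div_le (hAm : MeasurableSet A) (hAΩ : A ⊆ Ω)
    (hΦ0 : ∀ x ∈ Ω, Φ x 0 = 0) {c l : ℝ} (hc : ∀ x ∈ A, Φ x (1 / l) ≤ c) :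
    ∫⁻ x in Ω, ENNReal.ofReal (Φ x (|A.indicator 1 x| / l)) ≤ ENNReal.ofReal c * volume A := by
  calc ∫⁻ x in Ω, ENNReal.ofReal (Φ x (|A.indicator 1 x| / l))
      ≤ ∫⁻ x in Ω, A.indicator (fun _ => ENNReal.ofReal c) x := by
        refine setLIntegral_mono (measurable_const.indicator hAm) fun x hxΩ => ?_
        by_cases hxA : x ∈ A
        · simpa [hxA] using ENNReal.ofReal_le_ofReal (hc x hxA)
        · simp [hxA, hΦ0 x hxΩ]
    _ = ENNReal.ofReal c * volume A := by
        rw [lintegral_indicator hAm, setLIntegral_const, Measure.restrict_apply hAm,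
          inter_eq_self_of_subset_left hAΩ]

lemma le_setLIntegral_indicator_div (hAm : MeasurableSet A) (hAΩ : A ⊆ Ω) {c l : ℝ}
    (hc : ∀ x ∈ A, c ≤ Φ x (1 / l)) :
    ENNReal.ofReal c * volume A ≤ ∫⁻ x in Ω, ENNReal.ofReal (Φ x (|A.indicator 1 x| / l)) := by
  calc ENNReal.ofReal c * volume A = ∫⁻ x in Ω, A.indicator (fun _ => ENNReal.ofReal c) x := by
        rw [lintegral_indicator hAm, setLIntegral_const, Measure.restrict_apply hAm,
          inter_eq_self_of_subset_left hAΩ]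
    _ ≤ ∫⁻ x in Ω, ENNReal.ofReal (Φ x (|A.indicator 1 x| / l)) := by
        refine lintegral_mono fun x => ?_
        by_cases hxA : x ∈ A
        · simpa [hxA] using ENNReal.ofReal_le_ofReal (hc x hxA)
        · simp [hxA]

end Luxemburg

lemma one_add_mul_le_rpow {K t ℓ ρ pm q M : ℝ} (hK : 0 ≤ K) (ht : 0 ≤ t) (hℓ : 1 ≤ ℓ)
    (hρ : 0 ≤ ρ) (hpm : 0 < pm) (hpmq : pm ≤ q) (hq : 1 ≤ q) (hM : t ^ (1 / q) * ℓ ^ ρ ≤ M) :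
    (1 + K) * ℓ ^ ρ * t ≤ ((1 + K) ^ (1 / pm) * M) ^ q := by
  have hq0 : 0 < q := zero_lt_one.trans_le hq
  have hℓ0 : 0 ≤ ℓ := zero_le_one.trans hℓ
  have hK1 : 1 ≤ 1 + K := by linarith
  have hfactor : 1 + K ≤ ((1 + K) ^ (1 / pm)) ^ q := by
    rw [← Real.rpow_mul (by linarith)]
    conv_lhs => rw [← Real.rpow_one (1 + K)]
    exact Real.rpow_le_rpow_of_exponent_le hK1
      (by rw [one_div_mul_eq_div, le_div_iff₀ hpm]; linarith)
  have hpower : ℓ ^ ρ * t ≤ M ^ q :=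
    calc ℓ ^ ρ * t ≤ ℓ ^ (ρ * q) * t := by
          gcongr
          exact le_mul_of_one_le_right hρ hq
      _ = (t ^ (1 / q) * ℓ ^ ρ) ^ q := by
          rw [Real.mul_rpow (by positivity) (by positivity), ← Real.rpow_mul ht,
            one_div_mul_cancel hq0.ne', Real.rpow_one, ← Real.rpow_mul hℓ0, mul_comm]
      _ ≤ M ^ q := Real.rpow_le_rpow (by positivity) hM hq0.le
  rw [Real.mul_rpow (by positivity) ((by positivity : (0 : ℝ) ≤ _).trans hM), mul_assoc]
  exact mul_le_mul hfactor hpower (by positivity) (by positivity)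

section Indicator

variable {n : ℕ} {Ω A : Set (EuclideanSpace ℝ (Fin n))} {p r a : EuclideanSpace ℝ (Fin n) → ℝ}

lemma ofReal_rpow_le_luxNorm_indicator {pm : ℝ} (hAm : MeasurableSet A) (hAΩ : A ⊆ Ω)
    (hA1 : volume A ≤ 1) (hpm0 : 0 < pm) (hpm : ∀ x ∈ A, pm ≤ p x) (ha0 : ∀ x ∈ A, 0 ≤ a x) :
    ENNReal.ofReal ((volume A).toReal ^ (1 / pm)) ≤ luxNorm Ω (Phi2 p r a) (A.indicator 1) := by
  set t := (volume A).toReal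
  have ht0 : 0 ≤ t := ENNReal.toReal_nonneg
  have ht1 : t ≤ 1 := ENNReal.toReal_le_of_le_ofReal zero_le_one (by simpa using hA1)
  refine ofReal_le_luxNorm fun l hl hmod => ?_
  rcases le_or_gt 1 l with hl1 | hl1
  · exact (Real.rpow_le_one ht0 ht1 (by positivity)).trans hl1
  have hs1 : 1 ≤ 1 / l := by rw [le_div_iff₀ hl]; linarith
  have hmass : (1 / l) ^ pm * t ≤ 1 := by
    have hlow := le_setLIntegral_indicator_div (Φ := Phi2 p r a) hAm hAΩ (c := (1 / l) ^ pm)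
      fun x hx => (Real.rpow_le_rpow_of_exponent_le hs1 (hpm x hx)).trans
        (rpow_le_Phi2 (ha0 x hx) (by positivity))
    rw [← ENNReal.ofReal_toReal (hA1.trans_lt ENNReal.one_lt_top).ne,
      ← ENNReal.ofReal_mul (by positivity)] at hlow
    exact ENNReal.ofReal_le_one.mp (hlow.trans hmod)
  have ht : t ≤ l ^ pm := by
    rwa [one_div, Real.inv_rpow hl.le, inv_mul_le_iff₀ (by positivity), mul_one] at hmass
  calc t ^ (1 / pm) ≤ (l ^ pm) ^ (1 / pm) := Real.rpow_le_rpow ht0 ht (by positivity)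
    _ = l := by rw [← Real.rpow_mul hl.le, mul_one_div_cancel hpm0.ne', Real.rpow_one]

lemma luxNorm_indicator_le_of_rpow_le {K ρ l q ℓ : ℝ} (hAm : MeasurableSet A) (hAΩ : A ⊆ Ω)
    (hAfin : volume A ≠ ∞) (hp1 : ∀ x ∈ Ω, 1 ≤ p x) (ha0 : ∀ x ∈ A, 0 ≤ a x)
    (haK : ∀ x ∈ A, a x ≤ K) (hr : ∀ x ∈ A, r x ≤ ρ) (hρ : 0 ≤ ρ) (hl : 0 < l)
    (hq : ∀ x ∈ A, (1 / l) ^ p x ≤ (1 / l) ^ q) (hℓ : Real.log (Real.exp 1 + 1 / l) ≤ ℓ)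
    (hmass : (1 + K) * ℓ ^ ρ * (volume A).toReal ≤ l ^ q) :
    luxNorm Ω (Phi2 p r a) (A.indicator 1) ≤ ENNReal.ofReal l := by
  have hlog := one_le_log_exp_one_add (t := 1 / l) (by positivity)
  refine luxNorm_le_ofReal hl ((setLIntegral_indicator_div_le hAm hAΩ
    (fun x hx => Phi2_apply_zero (by linarith [hp1 x hx])) (c := (1 + K) * (1 / l) ^ q * ℓ ^ ρ)
    fun x hx => ?_).trans ?_)
  · have hK1 : 0 ≤ 1 + K := by linarith [ha0 x hx, haK x hx]
    calc Phi2 p r a x (1 / l) ≤ (1 + K) * (1 / l) ^ p x * Real.log (Real.exp 1 + 1 / l) ^ ρ :=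
          Phi2_le_mul_log_rpow (ha0 x hx) (haK x hx) (hr x hx) hρ (by positivity)
      _ ≤ (1 + K) * (1 / l) ^ q * ℓ ^ ρ := by
          gcongr (1 + K) * ?_ * ?_
          · exact hq x hx
          · exact Real.rpow_le_rpow (by positivity) hℓ hρ
  · rw [← ENNReal.ofReal_toReal hAfin, ← ENNReal.ofReal_mul' ENNReal.toReal_nonneg,
      ENNReal.ofReal_le_one, one_div, Real.inv_rpow hl.le,
      show (1 + K) * (l ^ q)⁻¹ * ℓ ^ ρ * (volume A).toReal
        = (1 + K) * ℓ ^ ρ * (volume A).toReal / l ^ q by ring]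
    exact div_le_one_of_le₀ hmass (by positivity)

lemma luxNorm_indicator_le {K ρ pm pp : ℝ} (hAm : MeasurableSet A) (hAΩ : A ⊆ Ω)
    (hA0 : 0 < volume A) (hA1 : volume A ≤ 1) (hp1 : ∀ x ∈ Ω, 1 ≤ p x) (hpm1 : 1 ≤ pm)
    (hpmpp : pm ≤ pp) (hpm : ∀ x ∈ A, pm ≤ p x) (hpp : ∀ x ∈ A, p x ≤ pp)
    (ha0 : ∀ x ∈ A, 0 ≤ a x) (haK : ∀ x ∈ A, a x ≤ K) (hr : ∀ x ∈ A, r x ≤ ρ) (hρ : 0 ≤ ρ) :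
    luxNorm Ω (Phi2 p r a) (A.indicator 1) ≤ ENNReal.ofReal ((1 + K) ^ (1 / pm) *
      max ((volume A).toReal ^ (1 / pp) *
            Real.log (Real.exp 1 + 1 / (volume A).toReal) ^ ρ)
          ((volume A).toReal ^ (1 / pm) * Real.log (1 + Real.exp 1) ^ ρ)) := by
  have hAfin : volume A ≠ ∞ := (hA1.trans_lt ENNReal.one_lt_top).ne
  set t := (volume A).toReal
  have ht0 : 0 < t := ENNReal.toReal_pos hA0.ne' hAfin
  have ht1 : t ≤ 1 := ENNReal.toReal_le_of_le_ofReal zero_le_one (by simpa using hA1)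
  obtain ⟨z, hz⟩ := nonempty_of_measure_ne_zero hA0.ne'
  have hK : 0 ≤ K := (ha0 z hz).trans (haK z hz)
  have hpm0 : 0 < pm := zero_lt_one.trans_le hpm1
  have hL := one_le_log_exp_one_add (t := 1 / t) (by positivity)
  have hC : 1 ≤ Real.log (1 + Real.exp 1) := by
    simpa [add_comm] using one_le_log_exp_one_add (zero_le_one' ℝ)
  set M := max (t ^ (1 / pp) * Real.log (Real.exp 1 + 1 / t) ^ ρ)
    (t ^ (1 / pm) * Real.log (1 + Real.exp 1) ^ ρ)
  have hM : 0 < M := lt_max_of_lt_right (by positivity)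
  have hl : 0 < (1 + K) ^ (1 / pm) * M := by positivity
  rcases le_or_gt 1 ((1 + K) ^ (1 / pm) * M) with hl1 | hl1
  · have hs1 : 1 / ((1 + K) ^ (1 / pm) * M) ≤ 1 := (div_le_one hl).mpr hl1
    refine luxNorm_indicator_le_of_rpow_le (ℓ := Real.log (1 + Real.exp 1)) hAm hAΩ hAfin hp1
      ha0 haK hr hρ hl (fun x hx => Real.rpow_le_rpow_of_exponent_ge (by positivity) hs1 (hpm x hx))
      (Real.log_le_log (by positivity) (by linarith)) ?_
    exact one_add_mul_le_rpow hK ht0.le hC hρ hpm0 le_rfl hpm1 (le_max_right _ _)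
  · have hs1 : 1 ≤ 1 / ((1 + K) ^ (1 / pm) * M) := by rw [le_div_iff₀ hl]; linarith
    have htl : t ≤ (1 + K) ^ (1 / pm) * M :=
      calc t ≤ t ^ (1 / pp) := Real.self_le_rpow_of_le_one ht0.le ht1
              (by rw [div_le_one (by linarith)]; linarith)
        _ ≤ t ^ (1 / pp) * Real.log (Real.exp 1 + 1 / t) ^ ρ :=
            le_mul_of_one_le_right (by positivity) (Real.one_le_rpow hL hρ)
        _ ≤ M := le_max_left _ _
        _ ≤ (1 + K) ^ (1 / pm) * M :=
            le_mul_of_one_le_left hM.le (Real.one_le_rpow (by linarith) (by positivity))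
    refine luxNorm_indicator_le_of_rpow_le (ℓ := Real.log (Real.exp 1 + 1 / t)) hAm hAΩ hAfin
      hp1 ha0 haK hr hρ hl (fun x hx => Real.rpow_le_rpow_of_exponent_le hs1 (hpp x hx))
      (Real.log_le_log (by positivity) (by gcongr)) ?_
    exact one_add_mul_le_rpow hK ht0.le hL hρ hpm0 hpmpp (hpm1.trans hpmpp) (le_max_left _ _)

end Indicator

theorem stmt_14_general {n : ℕ}
    (Ω : Set (EuclideanSpace ℝ (Fin n)))
    (p r a : EuclideanSpace ℝ (Fin n) → ℝ)
    (hp1 : ∀ x ∈ Ω, 1 ≤ p x) (hpB : BddAbove (p '' Ω))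
    (hrB : BddAbove (r '' Ω))
    (ha0 : ∀ x ∈ Ω, 0 ≤ a x) (haB : BddAbove (a '' Ω)) :
    ∃ b : ℝ, 0 < b ∧
      ∀ A : Set (EuclideanSpace ℝ (Fin n)), A ⊆ Ω → MeasurableSet A →
        0 < volume A → volume A < 1/2 → 0 ≤ sSup (r '' A) →
        ENNReal.ofReal ((volume A).toReal ^ (1 / sInf (p '' A))) ≤
          luxNorm Ω (Phi2 p r a) (A.indicator 1) ∧
        luxNorm Ω (Phi2 p r a) (A.indicator 1) ≤
          ENNReal.ofReal (b * (1 + sSup (a '' Ω)) ^ (1 / sInf (p '' A)) *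
            max ((volume A).toReal ^ (1 / sSup (p '' A)) *
                  (Real.log (Real.exp 1 + 1 / (volume A).toReal)) ^ sSup (r '' A))
                ((volume A).toReal ^ (1 / sInf (p '' A)) *
                  (Real.log (1 + Real.exp 1)) ^ sSup (r '' A))) := by
  refine ⟨1, one_pos, fun A hAΩ hAm hA0 hA2 hrA => ?_⟩
  have hA1 : volume A ≤ 1 := hA2.le.trans (by norm_num)
  obtain ⟨z, hz⟩ := nonempty_of_measure_ne_zero hA0.ne'
  have hp1A : ∀ y ∈ p '' A, 1 ≤ y := by
    rintro _ ⟨x, hx, rfl⟩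
    exact hp1 x (hAΩ hx)
  have hpm1 : 1 ≤ sInf (p '' A) := le_csInf ⟨p z, z, hz, rfl⟩ hp1A
  have hpm : ∀ x ∈ A, sInf (p '' A) ≤ p x := fun x hx => csInf_le ⟨1, hp1A⟩ ⟨x, hx, rfl⟩
  have hpp : ∀ x ∈ A, p x ≤ sSup (p '' A) :=
    fun x hx => le_csSup (hpB.mono (image_mono hAΩ)) ⟨x, hx, rfl⟩
  have hr : ∀ x ∈ A, r x ≤ sSup (r '' A) :=
    fun x hx => le_csSup (hrB.mono (image_mono hAΩ)) ⟨x, hx, rfl⟩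
  have haK : ∀ x ∈ A, a x ≤ sSup (a '' Ω) := fun x hx => le_csSup haB ⟨x, hAΩ hx, rfl⟩
  have ha0A : ∀ x ∈ A, 0 ≤ a x := fun x hx => ha0 x (hAΩ hx)
  rw [one_mul]
  exact ⟨ofReal_rpow_le_luxNorm_indicator hAm hAΩ hA1 (zero_lt_one.trans_le hpm1) hpm ha0A,
    luxNorm_indicator_le hAm hAΩ hA0 hA1 hp1 hpm1 ((hpm z hz).trans (hpp z hz)) hpm hpp ha0A
      haK hr hrA⟩

/-- when `r` takes both a negative and a nonnegative value on `Ω`,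
there is a constant `b > 0` such that for every measurable `A ⊆ Ω` with
`0 < |A| < 1/2` and `sup_A r ≥ 0`:
`|A|^{1/p⁻_A} ≤ ‖1_A‖_{L^Φ(Ω)} ≤ b(1+‖a‖_∞)^{1/p⁻_A} ·
max{|A|^{1/p⁺_A}(log(e+1/|A|))^{r⁺_A}, |A|^{1/p⁻_A}(log(1+e))^{r⁺_A}}`. -/
theorem stmt_14 {n : ℕ}
    (Ω : Set (EuclideanSpace ℝ (Fin n))) (hΩm : MeasurableSet Ω)
    (p r a : EuclideanSpace ℝ (Fin n) → ℝ)
    (hpm : Measurable p) (hp1 : ∀ x ∈ Ω, 1 ≤ p x) (hpB : BddAbove (p '' Ω))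
    (hrm : Measurable r) (hrB : BddAbove (r '' Ω)) (hrb : BddBelow (r '' Ω))
    (hrneg : ∃ x ∈ Ω, r x < 0) (hrpos : ∃ x ∈ Ω, 0 ≤ r x)
    (ham : Measurable a) (ha0 : ∀ x ∈ Ω, 0 ≤ a x) (haB : BddAbove (a '' Ω)) :
    ∃ b : ℝ, 0 < b ∧
      ∀ A : Set (EuclideanSpace ℝ (Fin n)), A ⊆ Ω → MeasurableSet A →
        0 < volume A → volume A < 1/2 → 0 ≤ sSup (r '' A) →
        ENNReal.ofReal ((volume A).toReal ^ (1 / sInf (p '' A))) ≤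
          luxNorm Ω (Phi2 p r a) (A.indicator 1) ∧
        luxNorm Ω (Phi2 p r a) (A.indicator 1) ≤
          ENNReal.ofReal (b * (1 + sSup (a '' Ω)) ^ (1 / sInf (p '' A)) *
            max ((volume A).toReal ^ (1 / sSup (p '' A)) *
                  (Real.log (Real.exp 1 + 1 / (volume A).toReal)) ^ sSup (r '' A))
                ((volume A).toReal ^ (1 / sInf (p '' A)) *
                  (Real.log (1 + Real.exp 1)) ^ sSup (r '' A))) :=
  stmt_14_general Ω p r a hp1 hpB hrB ha0 haB
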